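/- arXiv:1004.0224 — 2 statements merged into one kernel-verified Lean document; each statement's English description precedes it below -/
import Mathlib

section
/- The map r : C → Ind defined by r(a)(φᵢH₀) = 0 if a(√(−φᵢ(d))) = √(−φᵢ(d)) and r(a)(φᵢH₀) = 1 otherwise does not depend on the choice of the totally positive element d with K = K₀(√−d), and r is an injective homomorphism of G-modules, where G acts on C by conjugation τ·a = τaτ⁻¹ and on Ind by (σ·f)(τH₀) = f(σ⁻¹τH₀). -/
open scoped Classical

/- Setting: `Kc = K^c` is the Galois closure over `ℚ` of a CM-field `K` with maximal totally
real subfield `K₀`; `G = Gal(K^c/ℚ)`, `H₀ = Gal(K^c/K₀)` is the fixing subgroup of `K₀`,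
`C = Gal(K^c/K₀^c)` is the fixing subgroup of the Galois closure `K₀^c` of `K₀`, and
`Ind = Map(G/H₀, ℤ/2ℤ)`.  Embeddings `φᵢ : K₀ ↪ ℂ` correspond to the cosets of `G ⧸ H₀`. -/

/-- The action of `G` on `Ind = Map(G/H₀, ℤ/2ℤ)`: `(σ·f)(τH₀) = f(σ⁻¹τH₀)`. -/
def indAct {G : Type} [Group G] (H₀ : Subgroup G) (σ : G)
    (f : (G ⧸ H₀) → ZMod 2) : (G ⧸ H₀) → ZMod 2 :=
  fun x => f (σ⁻¹ • x)

/-- The map `r : C → Ind` attached to a totally positive `d ∈ K₀` with `K = K₀(√−d)`: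
`r(a)(φᵢH₀) = 0` if `a(√(−φᵢ(d))) = √(−φᵢ(d))` and `r(a)(φᵢH₀) = 1` otherwise, where `φᵢ` is
(a coset of) an automorphism `τ` of `K^c` and `√(−φᵢ(d))` is any square root of `−τ(d)`
in `K^c`. -/
noncomputable def rmap {Kc : Type} [Field Kc] [Algebra ℚ Kc]
    (K₀ : IntermediateField ℚ Kc) (d : Kc) (a : Kc ≃ₐ[ℚ] Kc)
    (x : (Kc ≃ₐ[ℚ] Kc) ⧸ K₀.fixingSubgroup) : ZMod 2 :=
  if ∀ τ : Kc ≃ₐ[ℚ] Kc, (τ : (Kc ≃ₐ[ℚ] Kc) ⧸ K₀.fixingSubgroup) = x →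
      ∀ s : Kc, s ^ 2 = -(τ d) → a s = s
  then 0 else 1

/-!
An element `a ∈ C` fixes every conjugate `τ(K₀)`, so it sends each conjugate `τ(√−d)` to
`±τ(√−d)`, and `r(a)` records these signs; this makes `r` additive and `G`-equivariant.
Two square roots generating `K` over `K₀` differ by a factor in `K₀`, because every element of
`Gal(K^c/K₀)` moves both by the same sign, so the signs do not depend on `d`. If `r(a) = 0`,
then `a` fixes every conjugate of `K = K₀(√−d)`, hence their compositum `K^c`, so `a = 1`.
-/

namespace IntermediateField

variable {k E : Type*} [Field k] [Field E] [Algebra k E]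

theorem fixingSubgroup_iSup {ι : Sort*} (L : ι → IntermediateField k E) :
    (⨆ i, L i).fixingSubgroup = ⨅ i, (L i).fixingSubgroup := by
  ext σ
  simp [← Subgroup.zpowers_le, ← le_iff_le]

theorem mem_fixingSubgroup_adjoin_simple_iff {σ : E ≃ₐ[k] E} {s : E} :
    σ ∈ (adjoin k {s}).fixingSubgroup ↔ σ s = s := by
  refine ⟨fun h => h ⟨s, mem_adjoin_simple_self k s⟩, fun h => ?_⟩
  rw [← Subgroup.zpowers_le, ← le_iff_le, adjoin_simple_le_iff, mem_fixedField_iff]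
  intro ρ hρ
  exact (Subgroup.zpowers_le (H := MulAction.stabilizer _ s)).mpr h hρ

theorem mem_fixingSubgroup_sup_adjoin_simple {K : IntermediateField k E} {σ : E ≃ₐ[k] E} {s : E}
    (hσ : σ ∈ K.fixingSubgroup) (hs : σ s = s) : σ ∈ (K ⊔ adjoin k {s}).fixingSubgroup := by
  rw [fixingSubgroup_sup]
  exact ⟨hσ, mem_fixingSubgroup_adjoin_simple_iff.mpr hs⟩

theorem apply_eq_or_eq_neg_of_sq_mem {K : IntermediateField k E} {σ : E ≃ₐ[k] E}
    (hσ : σ ∈ K.fixingSubgroup) {t : E} (ht : t ^ 2 ∈ K) : σ t = t ∨ σ t = -t :=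
  sq_eq_sq_iff_eq_or_eq_neg.mp (by rw [← map_pow, (mem_fixingSubgroup_iff _ _).mp hσ _ ht])

theorem apply_mem_normalClosure (K : IntermediateField k E) (τ : E ≃ₐ[k] E) {x : E}
    (hx : x ∈ K) : τ x ∈ normalClosure k K E :=
  ((τ : E →ₐ[k] E).comp K.val).fieldRange_le_normalClosure ⟨⟨x, hx⟩, rfl⟩

theorem _root_.AlgEquiv.conj_apply_eq_iff (τ c : E ≃ₐ[k] E) (x : E) :
    (τ⁻¹ * c * τ) x = x ↔ c (τ x) = τ x := by
  rw [AlgEquiv.mul_apply, AlgEquiv.mul_apply, AlgEquiv.aut_inv, AlgEquiv.symm_apply_eq]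

theorem eq_one_of_forall_conj_mem_fixingSubgroup [Normal k E] {K : IntermediateField k E}
    (hK : normalClosure k K E = ⊤) {c : E ≃ₐ[k] E}
    (hc : ∀ τ : E ≃ₐ[k] E, τ⁻¹ * c * τ ∈ K.fixingSubgroup) : c = 1 := by
  rw [← Subgroup.mem_bot, ← fixingSubgroup_top, ← hK, normalClosure_def'', fixingSubgroup_iSup,
    Subgroup.mem_iInf]
  intro τ
  rw [mem_fixingSubgroup_iff]
  rintro _ ⟨x, hx, rfl⟩
  exact (τ.conj_apply_eq_iff c x).mp ((mem_fixingSubgroup_iff _ _).mp (hc τ) x hx)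

theorem eq_one_of_forall_apply_eq_of_normalClosure_sup_eq_top [Normal k E]
    {K₀ : IntermediateField k E} {s : E} (hK : normalClosure k ↥(K₀ ⊔ adjoin k {s}) E = ⊤)
    {c : E ≃ₐ[k] E} (hc : c ∈ (normalClosure k K₀ E).fixingSubgroup)
    (hs : ∀ τ : E ≃ₐ[k] E, c (τ s) = τ s) : c = 1 := by
  refine eq_one_of_forall_conj_mem_fixingSubgroup hK fun τ => ?_
  refine mem_fixingSubgroup_sup_adjoin_simple ((mem_fixingSubgroup_iff _ _).mpr fun x hx => ?_) ?_
  · exact (τ.conj_apply_eq_iff c x).mpr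
      ((mem_fixingSubgroup_iff _ _).mp hc _ (apply_mem_normalClosure K₀ τ hx))
  · exact (τ.conj_apply_eq_iff c s).mpr (hs τ)

theorem div_mem_of_sup_adjoin_eq [FiniteDimensional k E] [IsGalois k E]
    {K : IntermediateField k E} {s s' : E} (hs : s ^ 2 ∈ K) (hs' : s' ^ 2 ∈ K)
    (h : K ⊔ adjoin k {s} = K ⊔ adjoin k {s'}) : s' / s ∈ K := by
  rw [← IsGalois.fixedField_fixingSubgroup K, mem_fixedField_iff]
  intro σ hσ
  -- `σ` moves `s` and `s'` by the same sign: if it fixes one, it fixes `K` adjoin that one.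
  have fix_of_fix (t t' : E) (hK : K ⊔ adjoin k {t} = K ⊔ adjoin k {t'}) (ht : σ t = t) :
      σ t' = t' :=
    (mem_fixingSubgroup_iff _ _).mp (mem_fixingSubgroup_sup_adjoin_simple hσ ht) t'
      (hK ▸ (le_sup_right : adjoin k {t'} ≤ _) (mem_adjoin_simple_self k t'))
  rcases apply_eq_or_eq_neg_of_sq_mem hσ hs with h₁ | h₁
  · rw [map_div₀, h₁, fix_of_fix s s' h h₁]
  rcases apply_eq_or_eq_neg_of_sq_mem hσ hs' with h₂ | h₂
  · rw [map_div₀, h₂, fix_of_fix s' s h.symm h₂]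
  · rw [map_div₀, h₁, h₂, neg_div_neg_eq]

theorem notMem_of_finrank_eq_two_mul [FiniteDimensional k E] {K₀ K : IntermediateField k E}
    {s : E} (hK : K = K₀ ⊔ adjoin k {s}) (hdeg : Module.finrank k K = 2 * Module.finrank k K₀) :
    s ∉ K₀ := by
  intro hs
  rw [sup_eq_left.mpr (adjoin_simple_le_iff.mpr hs)] at hK
  have : 0 < Module.finrank k K₀ := Module.finrank_pos
  rw [hK] at hdeg
  omega

/-- Over `ℚ`, `normalClosure ℚ K E` elaborates with the canonical `ℚ`-algebra structure
`DivisionRing.toRatAlgebra` on `K`, not with the one `K` inherits as a subfield; the two agree. -/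
theorem normalClosure_algebra'_eq {E : Type*} [Field E] [Algebra ℚ E] (K : IntermediateField ℚ E) :
    @normalClosure ℚ K E _ _ _ K.algebra' _ = normalClosure ℚ K E := by
  congr
  exact Subsingleton.elim _ _

end IntermediateField

theorem ite_mul_apply_eq_add {k E : Type*} [Field k] [Field E] [CharZero E] [Algebra k E]
    {σ ρ : E ≃ₐ[k] E} {t : E} (ht : t ≠ 0) (hσ : σ t = t ∨ σ t = -t) (hρ : ρ t = t ∨ ρ t = -t) :
    (if (σ * ρ) t = t then 0 else 1 : ZMod 2) =
      (if σ t = t then 0 else 1) + (if ρ t = t then 0 else 1) := by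
  have hneg : -t ≠ t := by rwa [ne_eq, CharZero.neg_eq_self_iff]
  rcases hσ with hσ | hσ <;> rcases hρ with hρ | hρ <;>
    simp +decide [AlgEquiv.mul_apply, hσ, hρ, hneg]

open IntermediateField

section Rmap

variable {Kc : Type} [Field Kc] [Algebra ℚ Kc] {K₀ : IntermediateField ℚ Kc} {d s : Kc}

theorem rmap_mk (hd : d ∈ K₀) (hs : s ^ 2 = -d) (a τ : Kc ≃ₐ[ℚ] Kc) :
    rmap K₀ d a τ = if a (τ s) = τ s then 0 else 1 := by
  refine if_congr ⟨fun h => h τ rfl (τ s) (by rw [← map_pow, hs, map_neg]), ?_⟩ rfl rfl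
  intro h τ' hτ' t ht
  have hτd : τ' d = τ d := by
    have := (mem_fixingSubgroup_iff _ _).mp (QuotientGroup.eq.mp hτ') d hd
    rwa [AlgEquiv.mul_apply, AlgEquiv.aut_inv, AlgEquiv.symm_apply_eq, eq_comm] at this
  rcases sq_eq_sq_iff_eq_or_eq_neg.mp (show t ^ 2 = (τ s) ^ 2 by rw [ht, hτd, ← map_pow, hs, map_neg])
    with rfl | rfl
  · exact h
  · rw [map_neg, h]

theorem rmap_mul [CharZero Kc] (hd : d ∈ K₀) (hs : s ^ 2 = -d) (hs₀ : s ≠ 0)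
    {a b : Kc ≃ₐ[ℚ] Kc} (ha : a ∈ (normalClosure ℚ K₀ Kc).fixingSubgroup)
    (hb : b ∈ (normalClosure ℚ K₀ Kc).fixingSubgroup) :
    rmap K₀ d (a * b) = rmap K₀ d a + rmap K₀ d b := by
  rw [← normalClosure_algebra'_eq] at ha hb
  funext x
  obtain ⟨τ, rfl⟩ := QuotientGroup.mk_surjective x
  have hτs := apply_mem_normalClosure K₀ τ (neg_mem hd)
  rw [← hs, map_pow] at hτs
  rw [Pi.add_apply, rmap_mk hd hs, rmap_mk hd hs, rmap_mk hd hs]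
  exact ite_mul_apply_eq_add (by simpa using hs₀) (apply_eq_or_eq_neg_of_sq_mem ha hτs)
    (apply_eq_or_eq_neg_of_sq_mem hb hτs)

theorem rmap_conj (hd : d ∈ K₀) (hs : s ^ 2 = -d) (τ a : Kc ≃ₐ[ℚ] Kc) :
    rmap K₀ d (τ * a * τ⁻¹) = indAct K₀.fixingSubgroup τ (rmap K₀ d a) := by
  funext x
  obtain ⟨σ, rfl⟩ := QuotientGroup.mk_surjective x
  change rmap K₀ d (τ * a * τ⁻¹) σ = rmap K₀ d a ↑(τ⁻¹ * σ)
  rw [rmap_mk hd hs, rmap_mk hd hs]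
  exact if_congr (by simpa only [inv_inv, AlgEquiv.mul_apply] using τ⁻¹.conj_apply_eq_iff a (σ s))
    rfl rfl

theorem forall_apply_eq_of_rmap_eq_zero (hd : d ∈ K₀) (hs : s ^ 2 = -d) {c : Kc ≃ₐ[ℚ] Kc}
    (hc : rmap K₀ d c = 0) (τ : Kc ≃ₐ[ℚ] Kc) : c (τ s) = τ s := by
  have := congrFun hc τ
  rw [rmap_mk hd hs] at this
  by_contra h
  simp [h] at this

theorem rmap_eq_of_eq_mul {d' s' u : Kc} (hd : d ∈ K₀) (hs : s ^ 2 = -d) (hd' : d' ∈ K₀)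
    (hs' : s' ^ 2 = -d') (hu : u ∈ K₀) (hu₀ : u ≠ 0) (hs's : s' = u * s) {a : Kc ≃ₐ[ℚ] Kc}
    (ha : a ∈ (normalClosure ℚ K₀ Kc).fixingSubgroup) : rmap K₀ d a = rmap K₀ d' a := by
  rw [← normalClosure_algebra'_eq] at ha
  funext x
  obtain ⟨τ, rfl⟩ := QuotientGroup.mk_surjective x
  have hτu : a (τ u) = τ u := (mem_fixingSubgroup_iff _ _).mp ha _ (apply_mem_normalClosure K₀ τ hu)
  rw [rmap_mk hd hs, rmap_mk hd' hs', hs's, map_mul, map_mul, hτu,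
    mul_right_inj' (by simpa using hu₀)]

theorem eq_of_rmap_eq [CharZero Kc] [Normal ℚ Kc] (hd : d ∈ K₀)
    (hs : s ^ 2 = -d) (hs₀ : s ≠ 0)
    (hgal : normalClosure ℚ (K₀ ⊔ adjoin ℚ {s} : IntermediateField ℚ Kc) Kc = ⊤)
    {a b : Kc ≃ₐ[ℚ] Kc} (ha : a ∈ (normalClosure ℚ K₀ Kc).fixingSubgroup)
    (hb : b ∈ (normalClosure ℚ K₀ Kc).fixingSubgroup) (hab : rmap K₀ d a = rmap K₀ d b) :
    a = b := by
  have hc : a⁻¹ * b ∈ (normalClosure ℚ K₀ Kc).fixingSubgroup := mul_mem (inv_mem ha) hb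
  have hc₀ : rmap K₀ d (a⁻¹ * b) = 0 := by
    have := rmap_mul hd hs hs₀ ha hc
    rwa [mul_inv_cancel_left, ← hab, left_eq_add] at this
  rw [← normalClosure_algebra'_eq] at hc hgal
  exact inv_mul_eq_one.mp (eq_one_of_forall_apply_eq_of_normalClosure_sup_eq_top hgal hc
    (forall_apply_eq_of_rmap_eq_zero hd hs hc₀))

end Rmap

theorem rmap_independent_injective_equivariant_general
    (Kc : Type) [Field Kc] [NumberField Kc] [IsGalois ℚ Kc]
    (K₀ K : IntermediateField ℚ Kc)
    -- `[K : K₀] = 2`  and  `K^c` is the Galois closure of `K` over `ℚ`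
    (hdeg : Module.finrank ℚ K = 2 * Module.finrank ℚ K₀)
    (hgal : IntermediateField.normalClosure ℚ ↥K Kc = ⊤)
    (d d' : Kc) (hd : d ∈ K₀) (hd' : d' ∈ K₀)
    -- `K = K₀(√−d) = K₀(√−d')`
    (hKd : ∃ s : Kc, s ^ 2 = -d ∧ K = K₀ ⊔ IntermediateField.adjoin ℚ {s})
    (hKd' : ∃ s : Kc, s ^ 2 = -d' ∧ K = K₀ ⊔ IntermediateField.adjoin ℚ {s}) :
    -- `r` does not depend on the choice of `d`
    (∀ a ∈ (IntermediateField.normalClosure ℚ ↥K₀ Kc).fixingSubgroup, rmap K₀ d a = rmap K₀ d' a) ∧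
    -- `r` is injective on `C`
    (∀ a ∈ (IntermediateField.normalClosure ℚ ↥K₀ Kc).fixingSubgroup,
      ∀ b ∈ (IntermediateField.normalClosure ℚ ↥K₀ Kc).fixingSubgroup,
        rmap K₀ d a = rmap K₀ d b → a = b) ∧
    -- `r` is a homomorphism of (additive) groups
    (∀ a ∈ (IntermediateField.normalClosure ℚ ↥K₀ Kc).fixingSubgroup,
      ∀ b ∈ (IntermediateField.normalClosure ℚ ↥K₀ Kc).fixingSubgroup,
        rmap K₀ d (a * b) = rmap K₀ d a + rmap K₀ d b) ∧
    -- `r` is `G`-equivariant for conjugation on `C` and the induced action on `Ind`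
    (∀ τ : Kc ≃ₐ[ℚ] Kc, ∀ a ∈ (IntermediateField.normalClosure ℚ ↥K₀ Kc).fixingSubgroup,
        rmap K₀ d (τ * a * τ⁻¹) = indAct K₀.fixingSubgroup τ (rmap K₀ d a)) := by
  obtain ⟨s, hs, rfl⟩ := hKd
  obtain ⟨s', hs', hss'⟩ := hKd'
  have hs₀ : s ≠ 0 := fun h => notMem_of_finrank_eq_two_mul rfl hdeg (h ▸ zero_mem K₀)
  have hs'₀ : s' ≠ 0 := fun h => notMem_of_finrank_eq_two_mul hss' hdeg (h ▸ zero_mem K₀)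
  have hu : s' / s ∈ K₀ :=
    div_mem_of_sup_adjoin_eq (hs ▸ neg_mem hd) (hs' ▸ neg_mem hd') hss'
  exact ⟨fun a ha => rmap_eq_of_eq_mul hd hs hd' hs' hu (div_ne_zero hs'₀ hs₀)
      (div_mul_cancel₀ s' hs₀).symm ha,
    fun a ha b hb => eq_of_rmap_eq hd hs hs₀ hgal ha hb,
    fun a ha b hb => rmap_mul hd hs hs₀ ha hb,
    fun τ a _ => rmap_conj hd hs τ a⟩

/-- **Lemma.** The map `r : C → Ind` does not depend on the choice of the
totally positive element `d` with `K = K₀(√−d)`, and `r` is an injective homomorphism of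
`G`-modules, where `G` acts on `C` by conjugation `τ·a = τaτ⁻¹` and on `Ind` by
`(σ·f)(τH₀) = f(σ⁻¹τH₀)`. -/
theorem rmap_independent_injective_equivariant
    (Kc : Type) [Field Kc] [NumberField Kc] [IsGalois ℚ Kc]
    (K₀ K : IntermediateField ℚ Kc) (hle : K₀ ≤ K)
    -- `K₀` is totally real
    (htr : ∀ σ : Kc →+* ℂ, ∀ x ∈ K₀, (σ x).im = 0)
    -- `K` is totally imaginary
    (hti : ∀ σ : Kc →+* ℂ, ∃ x ∈ K, (σ x).im ≠ 0)
    -- `[K : K₀] = 2`  and  `K^c` is the Galois closure of `K` over `ℚ`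
    (hdeg : Module.finrank ℚ K = 2 * Module.finrank ℚ K₀)
    (hgal : IntermediateField.normalClosure ℚ ↥K Kc = ⊤)
    (d d' : Kc) (hd : d ∈ K₀) (hd' : d' ∈ K₀)
    -- `d`, `d'` are totally positive
    (hdpos : ∀ σ : Kc →+* ℂ, 0 < (σ d).re ∧ (σ d).im = 0)
    (hdpos' : ∀ σ : Kc →+* ℂ, 0 < (σ d').re ∧ (σ d').im = 0)
    -- `K = K₀(√−d) = K₀(√−d')`
    (hKd : ∃ s : Kc, s ^ 2 = -d ∧ K = K₀ ⊔ IntermediateField.adjoin ℚ {s})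
    (hKd' : ∃ s : Kc, s ^ 2 = -d' ∧ K = K₀ ⊔ IntermediateField.adjoin ℚ {s}) :
    -- `r` does not depend on the choice of `d`
    (∀ a ∈ (IntermediateField.normalClosure ℚ ↥K₀ Kc).fixingSubgroup, rmap K₀ d a = rmap K₀ d' a) ∧
    -- `r` is injective on `C`
    (∀ a ∈ (IntermediateField.normalClosure ℚ ↥K₀ Kc).fixingSubgroup,
      ∀ b ∈ (IntermediateField.normalClosure ℚ ↥K₀ Kc).fixingSubgroup,
        rmap K₀ d a = rmap K₀ d b → a = b) ∧
    -- `r` is a homomorphism of (additive) groups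
    (∀ a ∈ (IntermediateField.normalClosure ℚ ↥K₀ Kc).fixingSubgroup,
      ∀ b ∈ (IntermediateField.normalClosure ℚ ↥K₀ Kc).fixingSubgroup,
        rmap K₀ d (a * b) = rmap K₀ d a + rmap K₀ d b) ∧
    -- `r` is `G`-equivariant for conjugation on `C` and the induced action on `Ind`
    (∀ τ : Kc ≃ₐ[ℚ] Kc, ∀ a ∈ (IntermediateField.normalClosure ℚ ↥K₀ Kc).fixingSubgroup,
        rmap K₀ d (τ * a * τ⁻¹) = indAct K₀.fixingSubgroup τ (rmap K₀ d a)) :=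
  rmap_independent_injective_equivariant_general Kc K₀ K hdeg hgal d d' hd hd' hKd hKd'
end

section
/- Let n ≥ 2 be even and let G = ⟨α, β : α^{2n} = 1, β² = 1, βαβ⁻¹ = α⁻¹⟩ be the dihedral group of order 4n. Put H = {1, β}, H₀ = {1, β, αⁿ, αⁿβ}, H̃ = {1, α^{n−1}β}, and H̃₀ = {1, α^{n−1}β, αⁿ, α^{2n−1}β}. Then the induced characters Ind_{H₀}^G(χ_{H₀/H}) and Ind_{H̃₀}^G(χ_{H̃₀/H̃}) are equal as characters of G. -/
/-! Conjugates of a rotation are rotations, and `H₀`, `H̃₀` contain the same rotations `1, αⁿ`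
while `H`, `H̃` both contain only `1`; so on rotations the two induction sums agree term by term.
On reflections both characters vanish: as `n` is even, conjugating a reflection `s` by `α^{n/2}`
gives `αⁿ s`, and `αⁿ` is a central element of `H₀ \ H` (resp. `H̃₀ \ H̃`), so the sign character
changes sign under `y ↦ αⁿ y` and each induction sum equals its own negative. -/

open scoped Classical

/-- The induced character `Ind_U^G(χ_{U/V})` of the nontrivial character `χ_{U/V} : U → {±1}`
with kernel `V` (a normal subgroup of `U` of index 2), computed by the standard induction
formula `(Ind_U^G χ)(g) = |U|⁻¹ ∑_{x ∈ G, x⁻¹gx ∈ U} χ(x⁻¹gx)`. -/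
noncomputable def indSignChar {G : Type} [Group G] (U V : Subgroup G) (g : G) : ℂ :=
  (Nat.card U : ℂ)⁻¹ *
    ∑ᶠ x : G, if x⁻¹ * g * x ∈ U then (if x⁻¹ * g * x ∈ V then 1 else -1) else 0

section IndSignChar

variable {G : Type} [Group G] {U V : Subgroup G}

/-- `χ_{U/V}`, extended by zero outside `U`. -/
noncomputable def signChar (U V : Subgroup G) (y : G) : ℂ :=
  if y ∈ U then (if y ∈ V then 1 else -1) else 0

lemma indSignChar_eq_finsum (U V : Subgroup G) (g : G) :
    indSignChar U V g = (Nat.card U : ℂ)⁻¹ * ∑ᶠ x : G, signChar U V (x⁻¹ * g * x) :=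
  rfl

lemma signChar_mul_of_relIndex_eq_two (hV : V.relIndex U = 2) {z : G} (hzU : z ∈ U)
    (hzV : z ∉ V) (y : G) : signChar U V (z * y) = -signChar U V y := by
  by_cases hyU : y ∈ U
  · have hmul : z * y ∈ V ↔ (z ∈ V ↔ y ∈ V) :=
      Subgroup.mul_mem_iff_of_index_two hV (a := ⟨z, hzU⟩) (b := ⟨y, hyU⟩)
    by_cases hyV : y ∈ V <;> simp [signChar, hyU, hzV, hyV, hmul, mul_mem hzU hyU]
  · simp [signChar, hyU, Subgroup.mul_mem_cancel_left U hzU]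

/-- If `g` is conjugate to `z * g` for a central `z ∈ U \ V`, the substitution `x ↦ w * x`
turns the induction sum into its own negative. -/
lemma indSignChar_eq_zero_of_conj_eq_mul (hV : V.relIndex U = 2) {z : G} (hzU : z ∈ U)
    (hzV : z ∉ V) (hz : z ∈ Subgroup.center G) {g w : G} (hw : w⁻¹ * g * w = z * g) :
    indSignChar U V g = 0 := by
  rw [indSignChar_eq_finsum]
  set S := ∑ᶠ x : G, signChar U V (x⁻¹ * g * x)
  have hconj (x : G) : (w * x)⁻¹ * g * (w * x) = z * (x⁻¹ * g * x) := by
    rw [mul_inv_rev, show x⁻¹ * w⁻¹ * g * (w * x) = x⁻¹ * (w⁻¹ * g * w) * x by group, hw]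
    simp only [← mul_assoc, Subgroup.mem_center_iff.mp hz x⁻¹]
  have hS : S = -S :=
    calc S = ∑ᶠ x : G, signChar U V ((w * x)⁻¹ * g * (w * x)) :=
          (finsum_comp_equiv (Equiv.mulLeft w) (f := fun x => signChar U V (x⁻¹ * g * x))).symm
      _ = -S := by
          simp only [hconj, signChar_mul_of_relIndex_eq_two hV hzU hzV, finsum_neg_distrib, S]
  rw [show S = 0 by linear_combination hS / 2, mul_zero]

lemma indSignChar_eq_of_mem_normal {N : Subgroup G} [N.Normal] {U' V' : Subgroup G}
    (hcard : Nat.card U = Nat.card U') (hU : ∀ y ∈ N, y ∈ U ↔ y ∈ U')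
    (hV : ∀ y ∈ N, y ∈ V ↔ y ∈ V') {g : G} (hg : g ∈ N) :
    indSignChar U V g = indSignChar U' V' g := by
  rw [indSignChar_eq_finsum, indSignChar_eq_finsum, hcard]
  congr 1
  refine finsum_congr fun x => ?_
  have hx : x⁻¹ * g * x ∈ N := by simpa using ‹N.Normal›.conj_mem g hg x⁻¹
  simp only [signChar, hU _ hx, hV _ hx]

end IndSignChar

namespace DihedralGroup

variable {N : ℕ}

def rotations : Subgroup (DihedralGroup N) where
  carrier := Set.range r
  mul_mem' := by
    rintro _ _ ⟨i, rfl⟩ ⟨j, rfl⟩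
    exact ⟨i + j, rfl⟩
  one_mem' := ⟨0, rfl⟩
  inv_mem' := by
    rintro _ ⟨i, rfl⟩
    exact ⟨-i, rfl⟩

instance : (rotations : Subgroup (DihedralGroup N)).Normal where
  conj_mem := by
    rintro _ ⟨i, rfl⟩ (j | j)
    · exact ⟨i, by simp [inv_r]⟩
    · exact ⟨-i, by simp [inv_sr]⟩

lemma r_mem_center_of_add_self_eq_zero {c : ZMod N} (hc : c + c = 0) :
    r c ∈ Subgroup.center (DihedralGroup N) := by
  refine Subgroup.mem_center_iff.mpr ?_
  rintro (i | i)
  · simp only [r_mul_r, add_comm]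
  · simp only [sr_mul_r, r_mul_sr, sr.injEq]
    linear_combination hc

lemma r_inv_mul_sr_mul_r (m j : ZMod N) : (r m)⁻¹ * sr j * r m = r (-(m + m)) * sr j := by
  simp only [inv_r, r_mul_sr, sr_mul_r, sr.injEq]
  ring

section KleinFour

variable {U V : Subgroup (DihedralGroup N)} {a c : ZMod N}

lemma r_mem_iff_of_coe_eq_pair (hV : (V : Set (DihedralGroup N)) = {1, sr a}) (k : ZMod N) :
    r k ∈ V ↔ k = 0 := by
  simp [← SetLike.mem_coe, hV, one_def, -r_zero]

lemma r_mem_iff_of_coe_eq_quad (hU : (U : Set (DihedralGroup N)) = {1, sr a, r c, r c * sr a})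
    (k : ZMod N) : r k ∈ U ↔ k = 0 ∨ k = c := by
  simp [← SetLike.mem_coe, hU, one_def, -r_zero, r_mul_sr]

lemma natCard_eq_four_of_coe_eq_quad (hc : c ≠ 0)
    (hU : (U : Set (DihedralGroup N)) = {1, sr a, r c, r c * sr a}) : Nat.card U = 4 := by
  rw [← SetLike.coe_sort_coe, Nat.card_coe_set_eq, hU, Set.ncard_insert_of_notMem,
    Set.ncard_insert_of_notMem, Set.ncard_pair] <;>
    simp [one_def, -r_zero, r_mul_sr, eq_sub_iff_add_eq, hc, Ne.symm hc]

lemma relIndex_eq_two_of_coe_eq (hc : c ≠ 0) (hV : (V : Set (DihedralGroup N)) = {1, sr a})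
    (hU : (U : Set (DihedralGroup N)) = {1, sr a, r c, r c * sr a}) : V.relIndex U = 2 := by
  have hVU : V ≤ U := fun x hx => by
    rw [← SetLike.mem_coe, hV] at hx
    rw [← SetLike.mem_coe, hU]
    rcases hx with rfl | rfl <;> simp
  have hcardV : Nat.card V = 2 := by
    rw [← SetLike.coe_sort_coe, Nat.card_coe_set_eq, hV,
      Set.ncard_pair (by simp [one_def, -r_zero])]
  have h := Subgroup.relIndex_mul_relIndex ⊥ V U bot_le hVU
  rw [Subgroup.relIndex_bot_left, Subgroup.relIndex_bot_left, hcardV,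
    natCard_eq_four_of_coe_eq_quad hc hU] at h
  omega

lemma indSignChar_sr_eq_zero {m : ZMod N} (hc : c ≠ 0) (hcc : c + c = 0) (hm : m + m = c)
    (hV : (V : Set (DihedralGroup N)) = {1, sr a})
    (hU : (U : Set (DihedralGroup N)) = {1, sr a, r c, r c * sr a}) (j : ZMod N) :
    indSignChar U V (sr j) = 0 := by
  refine indSignChar_eq_zero_of_conj_eq_mul (relIndex_eq_two_of_coe_eq hc hV hU)
    ((r_mem_iff_of_coe_eq_quad hU c).mpr (Or.inr rfl)) (by rwa [r_mem_iff_of_coe_eq_pair hV])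
    (r_mem_center_of_add_self_eq_zero hcc) (w := r m) ?_
  rw [r_inv_mul_sr_mul_r, hm, neg_eq_of_add_eq_zero_left hcc]

lemma indSignChar_r_eq {U' V' : Subgroup (DihedralGroup N)} {a' : ZMod N} (hc : c ≠ 0)
    (hV : (V : Set (DihedralGroup N)) = {1, sr a})
    (hU : (U : Set (DihedralGroup N)) = {1, sr a, r c, r c * sr a})
    (hV' : (V' : Set (DihedralGroup N)) = {1, sr a'})
    (hU' : (U' : Set (DihedralGroup N)) = {1, sr a', r c, r c * sr a'}) (j : ZMod N) :
    indSignChar U V (r j) = indSignChar U' V' (r j) := by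
  refine indSignChar_eq_of_mem_normal (N := rotations)
    ((natCard_eq_four_of_coe_eq_quad hc hU).trans (natCard_eq_four_of_coe_eq_quad hc hU').symm)
    ?_ ?_ ⟨j, rfl⟩
  · rintro _ ⟨k, rfl⟩
    rw [r_mem_iff_of_coe_eq_quad hU, r_mem_iff_of_coe_eq_quad hU']
  · rintro _ ⟨k, rfl⟩
    rw [r_mem_iff_of_coe_eq_pair hV, r_mem_iff_of_coe_eq_pair hV']

end KleinFour

end DihedralGroup

open DihedralGroup in
/-- Let `n ≥ 2` be even and `G = ⟨α, β ∣ α^{2n} = 1, β² = 1, βαβ⁻¹ = α⁻¹⟩`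
the dihedral group of order `4n`.  Put `H = {1, β}`, `H₀ = {1, β, αⁿ, αⁿβ}`,
`H̃ = {1, α^{n−1}β}` and `H̃₀ = {1, α^{n−1}β, αⁿ, α^{2n−1}β}`.  Then
`Ind_{H₀}^G(χ_{H₀/H}) = Ind_{H̃₀}^G(χ_{H̃₀/H̃})` as characters of `G` (Shimura's identity). -/
theorem dihedral_character_identity
    (n : ℕ) (hn2 : 2 ≤ n) (hneven : Even n)
    (α β : DihedralGroup (2 * n)) (hα : α = DihedralGroup.r 1) (hβ : β = DihedralGroup.sr 0)
    (H H₀ Ht Ht₀ : Subgroup (DihedralGroup (2 * n)))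
    (hH : (H : Set (DihedralGroup (2 * n))) = {1, β})
    (hH₀ : (H₀ : Set (DihedralGroup (2 * n))) = {1, β, α ^ n, α ^ n * β})
    (hHt : (Ht : Set (DihedralGroup (2 * n))) = {1, α ^ (n - 1) * β})
    (hHt₀ : (Ht₀ : Set (DihedralGroup (2 * n))) =
      {1, α ^ (n - 1) * β, α ^ n, α ^ (2 * n - 1) * β}) :
    ∀ g : DihedralGroup (2 * n), indSignChar H₀ H g = indSignChar Ht₀ Ht g := by
  obtain ⟨k, hk⟩ := hneven
  have hc : (n : ZMod (2 * n)) ≠ 0 := by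
    rw [Ne, ZMod.natCast_eq_zero_iff]
    exact fun h => absurd (Nat.le_of_dvd (by omega) h) (by omega)
  have hcc : (n : ZMod (2 * n)) + n = 0 := by
    rw [← Nat.cast_add, ← two_mul, ZMod.natCast_self]
  have hm : (k : ZMod (2 * n)) + k = n := by rw [hk, Nat.cast_add]
  have hαn : α ^ n = r n := by rw [hα, r_one_pow]
  obtain ⟨b, hb⟩ : ∃ b, α ^ (n - 1) * β = sr b := ⟨_, by rw [hα, hβ, r_one_pow, r_mul_sr]⟩
  have hα2 : α ^ (2 * n - 1) * β = α ^ n * (α ^ (n - 1) * β) := by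
    rw [← mul_assoc, ← pow_add, show n + (n - 1) = 2 * n - 1 by omega]
  rw [hβ] at hH
  rw [hαn, hβ] at hH₀
  rw [hb] at hHt
  rw [hα2, hb, hαn] at hHt₀
  rintro (j | j)
  · exact indSignChar_r_eq hc hH hH₀ hHt hHt₀ j
  · rw [indSignChar_sr_eq_zero hc hcc hm hH hH₀ j, indSignChar_sr_eq_zero hc hcc hm hHt hHt₀ j]
end
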